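/- Let p be an odd prime and k ∈ ℕ. The quadratic Gauss sum G_{p^k} = Σ_{x=1}^{p^k} e^{2πi x²/p^k} satisfies: G_{p^k} = p^{k/2} if k is even, and G_{p^k} = p^{(k−1)/2} · G_p if k is odd. -/

import Mathlib

/-!
With `ζ_q = e(1/q)`, write `x = a + p r b` with `a < p r`, `b < p`. Modulo `p² r` we have
`x² ≡ a² + p r · 2ab`, so the sum over `b` is a complete sum of `p`-th roots of unity: it is `p`
if `p ∣ 2a`, i.e. (as `p` is odd) if `p ∣ a`, and `0` otherwise. The surviving terms `a = p c`
give `ζ_{p²r}^{p²c²} = ζ_r^{c²}`, so `G_{p² r} = p G_r`. Iterating from `G_1 = 1` and `G_p` gives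
the theorem.
-/

open Complex Finset

/-- The quadratic Gauss sum `G_q = Σ_{x=1}^{q} e(x²/q)`. -/
noncomputable def quadGaussSum (q : ℕ) : ℂ :=
  ∑ x ∈ Finset.range q, Complex.exp (2 * Real.pi * Complex.I * ((x + 1 : ℕ)^2) / q)

theorem Finset.sum_range_add_one_of_apply_eq {M : Type*} [AddCommMonoid M] (f : ℕ → M) (n : ℕ)
    (h : f n = f 0) : ∑ x ∈ range n, f (x + 1) = ∑ x ∈ range n, f x := by
  rcases n with _ | n
  · rfl
  · rw [sum_range_succ, h, ← sum_range_succ']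

theorem Finset.sum_range_mul_eq_sum_sum {M : Type*} [AddCommMonoid M] (f : ℕ → M) (m n : ℕ) :
    ∑ x ∈ range (m * n), f x = ∑ a ∈ range m, ∑ b ∈ range n, f (a + m * b) := by
  rw [sum_comm]
  induction n with
  | zero => simp
  | succ n ih =>
    rw [sum_range_succ, ← ih, Nat.mul_succ, sum_range_add]
    simp only [add_comm]

theorem Finset.sum_range_mul_ite_dvd {M : Type*} [AddCommMonoid M] (g : ℕ → M) {p : ℕ}
    (hp : p ≠ 0) (n : ℕ) :
    ∑ a ∈ range (p * n), (if p ∣ a then g a else 0) = ∑ c ∈ range n, g (p * c) := by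
  rw [sum_range_mul_eq_sum_sum, sum_eq_single_of_mem 0 (mem_range.mpr (Nat.pos_of_ne_zero hp))]
  · simp
  · intro a ha ha0
    refine sum_eq_zero fun b _ => if_neg fun hdvd => ha0 ?_
    exact Nat.eq_zero_of_dvd_of_lt ((Nat.dvd_add_left (dvd_mul_right p b)).mp hdvd)
      (mem_range.mp ha)

theorem IsPrimitiveRoot.sum_range_pow_mul {R : Type*} [CommRing R] [IsDomain R] {ζ : R} {k : ℕ}
    (hζ : IsPrimitiveRoot ζ k) (a : ℕ) :
    ∑ b ∈ range k, ζ ^ (a * b) = if k ∣ a then (k : R) else 0 := by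
  simp_rw [pow_mul]
  split_ifs with hka
  · simp [(hζ.pow_eq_one_iff_dvd a).mpr hka]
  · have hne : ζ ^ a - 1 ≠ 0 := sub_ne_zero.mpr (mt (hζ.pow_eq_one_iff_dvd a).mp hka)
    have hpow : (ζ ^ a) ^ k = 1 := by rw [← pow_mul, mul_comm, pow_mul, hζ.pow_eq_one, one_pow]
    have hgeom := mul_geom_sum (ζ ^ a) k
    rw [hpow, sub_self] at hgeom
    exact (mul_eq_zero.mp hgeom).resolve_left hne

/-- `zeta q = e(1/q)`, with the junk value `zeta 0 = 1`. -/
noncomputable def zeta (q : ℕ) : ℂ := exp (2 * Real.pi * I / q)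

theorem isPrimitiveRoot_zeta {q : ℕ} (hq : q ≠ 0) : IsPrimitiveRoot (zeta q) q :=
  isPrimitiveRoot_exp q hq

theorem zeta_pow_self (q : ℕ) : zeta q ^ q = 1 := by
  rcases eq_or_ne q 0 with rfl | hq
  · exact pow_zero _
  · exact (isPrimitiveRoot_zeta hq).pow_eq_one

theorem zeta_mul_pow (q : ℕ) {d : ℕ} (hd : d ≠ 0) : zeta (q * d) ^ d = zeta q := by
  rw [zeta, zeta, ← exp_nat_mul]
  congr 1
  push_cast
  field_simp

theorem quadGaussSum_eq_sum_zeta_pow (q : ℕ) :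
    quadGaussSum q = ∑ x ∈ range q, zeta q ^ (x ^ 2) := by
  have hexp : ∀ n : ℕ, exp (2 * Real.pi * I * n / q) = zeta q ^ n := fun n => by
    rw [zeta, ← exp_nat_mul]
    ring_nf
  refine (sum_congr rfl fun x _ => ?_).trans
    (sum_range_add_one_of_apply_eq (fun x => zeta q ^ (x ^ 2)) q ?_)
  · rw [← hexp]
    push_cast
    rfl
  · simp [sq, pow_mul, zeta_pow_self]

theorem quadGaussSum_one : quadGaussSum 1 = 1 := by
  simp [quadGaussSum_eq_sum_zeta_pow]

theorem quadGaussSum_sq_mul {p : ℕ} (hp : Odd p) (r : ℕ) :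
    quadGaussSum (p ^ 2 * r) = p * quadGaussSum r := by
  rcases eq_or_ne r 0 with rfl | hr
  · simp [quadGaussSum]
  have hp0 : p ≠ 0 := hp.pos.ne'
  have hζp : zeta (p ^ 2 * r) ^ (p * r) = zeta p := by
    rw [show p ^ 2 * r = p * (p * r) by ring]
    exact zeta_mul_pow p (mul_ne_zero hp0 hr)
  have hterm : ∀ a b, zeta (p ^ 2 * r) ^ ((a + p * r * b) ^ 2)
      = zeta (p ^ 2 * r) ^ (a ^ 2) * zeta p ^ (2 * a * b) := by
    intro a b
    have hsq : (a + p * r * b) ^ 2 = a ^ 2 + p * r * (2 * a * b) + p ^ 2 * r * (r * b ^ 2) := by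
      ring
    rw [hsq, pow_add, pow_add, pow_mul _ (p ^ 2 * r), zeta_pow_self, one_pow, mul_one,
      pow_mul _ (p * r), hζp]
  have hinner : ∀ a, ∑ b ∈ range p, zeta p ^ (2 * a * b) = if p ∣ a then (p : ℂ) else 0 := by
    intro a
    simp only [(isPrimitiveRoot_zeta hp0).sum_range_pow_mul,
      (Nat.coprime_two_right.mpr hp).dvd_mul_left]
  calc quadGaussSum (p ^ 2 * r)
      = ∑ a ∈ range (p * r), ∑ b ∈ range p, zeta (p ^ 2 * r) ^ ((a + p * r * b) ^ 2) := by
        rw [quadGaussSum_eq_sum_zeta_pow,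
          ← sum_range_mul_eq_sum_sum (fun x => zeta (p ^ 2 * r) ^ (x ^ 2))]
        ring_nf
    _ = ∑ a ∈ range (p * r), if p ∣ a then p * zeta (p ^ 2 * r) ^ (a ^ 2) else 0 := by
        simp_rw [hterm, ← mul_sum, hinner, mul_ite, mul_zero, mul_comm]
    _ = p * ∑ c ∈ range r, zeta (p ^ 2 * r) ^ (p ^ 2 * c ^ 2) := by
        rw [sum_range_mul_ite_dvd _ hp0, mul_sum]
        simp_rw [mul_pow]
    _ = p * quadGaussSum r := by
        rw [quadGaussSum_eq_sum_zeta_pow]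
        simp_rw [pow_mul, mul_comm (p ^ 2) r, zeta_mul_pow r (pow_ne_zero 2 hp0)]

theorem quadGaussSum_pow_two_mul_mul {p : ℕ} (hp : Odd p) (j r : ℕ) :
    quadGaussSum (p ^ (2 * j) * r) = p ^ j * quadGaussSum r := by
  induction j with
  | zero => simp
  | succ j ih =>
    rw [show p ^ (2 * (j + 1)) * r = p ^ 2 * (p ^ (2 * j) * r) by ring, quadGaussSum_sq_mul hp, ih]
    ring

theorem quadGaussSum_prime_pow_general (p : ℕ) (hodd : Odd p) (k : ℕ) :
    (Even k → quadGaussSum (p^k) = (p : ℂ)^(k/2)) ∧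
    (Odd k → quadGaussSum (p^k) = (p : ℂ)^((k-1)/2) * quadGaussSum p) := by
  constructor
  · rintro ⟨j, rfl⟩
    have h := quadGaussSum_pow_two_mul_mul hodd j 1
    rw [mul_one, quadGaussSum_one, mul_one] at h
    rw [← two_mul, h, Nat.mul_div_cancel_left j two_pos]
  · rintro ⟨j, rfl⟩
    rw [pow_succ, quadGaussSum_pow_two_mul_mul hodd, Nat.add_sub_cancel,
      Nat.mul_div_cancel_left j two_pos]

/-- For an odd prime `p`: `G_{p^k} = p^{k/2}` if `k` is even, and
`G_{p^k} = p^{(k−1)/2} · G_p` if `k` is odd. -/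
theorem quadGaussSum_prime_pow (p : ℕ) (hp : p.Prime) (hodd : Odd p) (k : ℕ) :
    (Even k → quadGaussSum (p^k) = (p : ℂ)^(k/2)) ∧
    (Odd k → quadGaussSum (p^k) = (p : ℂ)^((k-1)/2) * quadGaussSum p) :=
  quadGaussSum_prime_pow_general p hodd k
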